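/- Let G(x) be a q×p matrix of real polynomial functions of x ∈ ℝ^p whose lowest-degree row matrix Ḡ(x) is in echelon form with row blocks of sizes n_1,…,n_ν of homogeneity degrees s̄_1 < … < s̄_ν, and set Δ_T = diag[T^{s̄_1/2} I_{n_1},…,T^{s̄_ν/2} I_{n_ν}]. Then for every y ∈ ℝ^p and every U ∈ F_p, Δ_T G(T^{−1/2}y) U G(T^{−1/2}y)ᵀ Δ_T → Ḡ(y) U Ḡ(y)ᵀ as T → ∞; moreover the same limit holds if U is replaced by any sequence U_T ∈ F_p with U_T → U. -/

import Mathlib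

open MeasureTheory Filter Topology Matrix

noncomputable section

/-- Evaluate a matrix of multivariate real polynomials at a point `x ∈ ℝ^p`. -/
def evalMat {q p : ℕ} (G : Matrix (Fin q) (Fin p) (MvPolynomial (Fin p) ℝ)) (x : Fin p → ℝ) :
    Matrix (Fin q) (Fin p) ℝ :=
  Matrix.of fun i j => MvPolynomial.eval x (G i j)

/-- A matrix over a commutative ring has rank at least `k` if it has a `k × k` submatrix whose
determinant is nonzero (for polynomial matrices: a not-identically-zero polynomial). -/
def rankGe {m n R : Type*} [Fintype m] [Fintype n] [CommRing R]
    (G : Matrix m n R) (k : ℕ) : Prop :=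
  ∃ (r : Fin k → m) (c : Fin k → n), Function.Injective r ∧ Function.Injective c ∧
    (G.submatrix r c).det ≠ 0

/-- `r` is the rank of the matrix `G` over a commutative ring: the largest dimension of a
square submatrix with nonzero determinant. -/
def IsPolyRank {m n R : Type*} [Fintype m] [Fintype n] [CommRing R]
    (G : Matrix m n R) (r : ℕ) : Prop :=
  rankGe G r ∧ ¬ rankGe G (r + 1)

/-- The lowest degree of a nonzero homogeneous component of a multivariate polynomial. -/
def lowDeg {p : ℕ} (h : MvPolynomial (Fin p) ℝ) : ℕ :=
  sInf {d | MvPolynomial.homogeneousComponent d h ≠ 0}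

/-- The minimal degree of a nonzero monomial among the entries of row `l` of `G`. -/
def rowDeg {q p : ℕ} (G : Matrix (Fin q) (Fin p) (MvPolynomial (Fin p) ℝ)) (l : Fin q) : ℕ :=
  sInf {d | ∃ j, MvPolynomial.homogeneousComponent d (G l j) ≠ 0}

/-- `Ḡ`: the lowest-degree row matrix of `G`; row `l` consists of the homogeneous components of
degree `rowDeg G l` of the entries of row `l` of `G`. -/
def lowMat {q p : ℕ} (G : Matrix (Fin q) (Fin p) (MvPolynomial (Fin p) ℝ)) :
    Matrix (Fin q) (Fin p) (MvPolynomial (Fin p) ℝ) :=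
  Matrix.of fun l j => MvPolynomial.homogeneousComponent (rowDeg G l) (G l j)

/-- Echelon form: the row degrees are nondecreasing (rows are stacked in blocks of equal degree
with strictly increasing degrees) and the rows of `Ḡ` are linearly independent as vectors of
polynomial functions. -/
def IsEchelon {q p : ℕ} (G : Matrix (Fin q) (Fin p) (MvPolynomial (Fin p) ℝ)) : Prop :=
  Monotone (rowDeg G) ∧ LinearIndependent ℝ (fun l : Fin q => lowMat G l)

/-- The echelon scaling matrix `Δ_T = diag[T^{s̄_l/2}]`. -/
def scaleMat {q : ℕ} (s : Fin q → ℕ) (T : ℝ) : Matrix (Fin q) (Fin q) ℝ :=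
  Matrix.diagonal fun l => T ^ ((s l : ℝ) / 2)

/-- The scaled matrix `M_T(y,U) = Δ_T G(T^{-1/2} y) U G(T^{-1/2} y)ᵀ Δ_T`. -/
def MT {q p : ℕ} (G : Matrix (Fin q) (Fin p) (MvPolynomial (Fin p) ℝ))
    (U : Matrix (Fin p) (Fin p) ℝ) (T : ℝ) (y : Fin p → ℝ) : Matrix (Fin q) (Fin q) ℝ :=
  scaleMat (rowDeg G) T * evalMat G (fun i => T ^ (-(1 : ℝ) / 2) * y i) * U *
    (evalMat G (fun i => T ^ (-(1 : ℝ) / 2) * y i))ᵀ * scaleMat (rowDeg G) T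

/-- `Ḡ(y) U Ḡ(y)ᵀ`. -/
def Bbar {q p : ℕ} (G : Matrix (Fin q) (Fin p) (MvPolynomial (Fin p) ℝ))
    (U : Matrix (Fin p) (Fin p) ℝ) (y : Fin p → ℝ) : Matrix (Fin q) (Fin q) ℝ :=
  evalMat (lowMat G) y * U * (evalMat (lowMat G) y)ᵀ

/-- `lam` is the vector of eigenvalues of `M` arranged in decreasing order:
it is antitone and enumerates the roots of the characteristic polynomial with multiplicity. -/
def IsOrderedEigs {q : ℕ} (M : Matrix (Fin q) (Fin q) ℝ) (lam : Fin q → ℝ) : Prop :=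
  Antitone lam ∧ M.charpoly = ∏ i, (Polynomial.X - Polynomial.C (lam i))

/-- The `k`-th elementary symmetric polynomial of `λ_1, …, λ_q`. -/
def esymmVal {q : ℕ} (k : ℕ) (lam : Fin q → ℝ) : ℝ :=
  ∑ S ∈ Finset.powersetCard k (Finset.univ : Finset (Fin q)), ∏ i ∈ S, lam i

/-- `B(x,U) = G(x) U G(x)ᵀ` as a matrix of polynomials in `x`. -/
def BPoly {q p : ℕ} (G : Matrix (Fin q) (Fin p) (MvPolynomial (Fin p) ℝ))
    (U : Matrix (Fin p) (Fin p) ℝ) : Matrix (Fin q) (Fin q) (MvPolynomial (Fin p) ℝ) :=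
  (G * (U.map MvPolynomial.C : Matrix (Fin p) (Fin p) (MvPolynomial (Fin p) ℝ)) :
    Matrix (Fin q) (Fin p) (MvPolynomial (Fin p) ℝ)) * Gᵀ

/-- The coefficient `a_k(x,U)` of `λ^{q-k}` in the characteristic polynomial of `B(x,U)`,
as a polynomial in `x`. -/
def acoeff {q p : ℕ} (G : Matrix (Fin q) (Fin p) (MvPolynomial (Fin p) ℝ))
    (U : Matrix (Fin p) (Fin p) ℝ) (k : ℕ) : MvPolynomial (Fin p) ℝ :=
  (BPoly G U).charpoly.coeff (q - k)

/-- `m_k(U)`: the lowest degree of a nonzero homogeneous-in-`x` component of `a_k(x,U)`. -/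
def mkU {q p : ℕ} (G : Matrix (Fin q) (Fin p) (MvPolynomial (Fin p) ℝ))
    (U : Matrix (Fin p) (Fin p) ℝ) (k : ℕ) : ℕ :=
  lowDeg (acoeff G U k)

/-- `m_k = min_{Q ∈ F_p} m_k(Q)`. -/
def mkmin {q p : ℕ} (G : Matrix (Fin q) (Fin p) (MvPolynomial (Fin p) ℝ)) (k : ℕ) : ℕ :=
  sInf ((fun U => mkU G U k) '' {U : Matrix (Fin p) (Fin p) ℝ | U.IsSymm ∧ U.PosDef})

/-- The symmetric matrix built from the upper-triangular entries of `u`. -/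
def symOfUpper {p : ℕ} (u : Fin p → Fin p → ℝ) : Matrix (Fin p) (Fin p) ℝ :=
  Matrix.of fun i j => if i ≤ j then u i j else u j i

/-- Principal minor of `M` with rows and columns in `S` retained. -/
def pminor {q : ℕ} {R : Type*} [CommRing R] (M : Matrix (Fin q) (Fin q) R)
    (S : Finset (Fin q)) : R :=
  (M.submatrix (fun i : {a // a ∈ S} => (i : Fin q)) (fun i : {a // a ∈ S} => (i : Fin q))).det

/-- The Jacobian matrix `∂g/∂θᵀ` of a vector of polynomials. -/
def jacMat {q p : ℕ} (g : Fin q → MvPolynomial (Fin p) ℝ) :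
    Matrix (Fin q) (Fin p) (MvPolynomial (Fin p) ℝ) :=
  Matrix.of fun l j => MvPolynomial.pderiv j (g l)

/-- The polynomial `f(θ̄ + ·)`. -/
def shiftPoly {p : ℕ} (θbar : Fin p → ℝ) (f : MvPolynomial (Fin p) ℝ) : MvPolynomial (Fin p) ℝ :=
  MvPolynomial.bind₁ (fun i => MvPolynomial.X i + MvPolynomial.C (θbar i)) f

/-- Convergence in distribution of `E`-valued random elements to the law `μ`:
weak convergence tested against bounded continuous functions. -/
def TendstoInDist {Ω E : Type*} [MeasurableSpace Ω] [TopologicalSpace E] [MeasurableSpace E]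
    (P : Measure Ω) (X : ℕ → Ω → E) (μ : Measure E) : Prop :=
  ∀ f : BoundedContinuousFunction E ℝ,
    Tendsto (fun T => ∫ ω, f (X T ω) ∂P) atTop (𝓝 (∫ x, f x ∂μ))

/-- `μ` is the centered Gaussian law `N(0,V)` on `ℝ^p`: a probability measure all of whose
one-dimensional linear marginals are centered Gaussian with the prescribed variance. -/
def IsGaussianLaw {p : ℕ} (μ : Measure (Fin p → ℝ)) (V : Matrix (Fin p) (Fin p) ℝ) : Prop :=
  IsProbabilityMeasure μ ∧
    ∀ a : Fin p → ℝ,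
      μ.map (fun x => ∑ i, a i * x i) =
        ProbabilityTheory.gaussianReal 0 (Real.toNNReal (∑ i, ∑ j, a i * V i j * a j))

/-- Convergence in probability to a constant. -/
def TendstoInProbConst {Ω E : Type*} [MeasurableSpace Ω] [PseudoMetricSpace E]
    (P : Measure Ω) (X : ℕ → Ω → E) (c : E) : Prop :=
  ∀ ε : ℝ, 0 < ε → Tendsto (fun T => P {ω | ε ≤ dist (X T ω) c}) atTop (𝓝 0)

/-- Divergence to `+∞` in probability. -/
def TendstoInProbAtTop {Ω : Type*} [MeasurableSpace Ω]
    (P : Measure Ω) (X : ℕ → Ω → ℝ) : Prop :=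
  ∀ C : ℝ, Tendsto (fun T => P {ω | X T ω ≤ C}) atTop (𝓝 0)

/-- Boundedness in probability (`O_p(1)`). -/
def BoundedInProb {Ω : Type*} [MeasurableSpace Ω]
    (P : Measure Ω) (X : ℕ → Ω → ℝ) : Prop :=
  ∀ ε : ℝ, 0 < ε → ∃ C : ℝ, ∀ᶠ T in atTop, P {ω | C ≤ |X T ω|} ≤ ENNReal.ofReal ε

end

lemma eval_mul_c {p n : ℕ} {h : MvPolynomial (Fin p) ℝ} (hh : h.IsHomogeneous n) (c : ℝ)
    (x : Fin p → ℝ) :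
    MvPolynomial.eval (fun i => c * x i) h = c ^ n * MvPolynomial.eval x h := by
  rw [MvPolynomial.eval_eq, MvPolynomial.eval_eq, Finset.mul_sum]
  refine Finset.sum_congr rfl fun d hd => ?_
  have h1 := hh (MvPolynomial.mem_support_iff.mp hd)
  have h2 : ∑ i, d i = n := by
    rw [← h1, Finsupp.weight_apply, Finsupp.sum_fintype] <;> simp
  have h3 : ∏ i, (c * x i) ^ (d i) = c ^ n * ∏ i, (x i) ^ (d i) := by
    rw [← h2, ← Finset.prod_pow_eq_pow_sum, ← Finset.prod_mul_distrib]
    exact Finset.prod_congr rfl fun i _ => mul_pow _ _ _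
  have hs : ∀ (y : Fin p → ℝ), ∏ i ∈ d.support, y i ^ d i = ∏ i, y i ^ d i := fun y =>
    Finset.prod_subset (Finset.subset_univ _)
      (fun i _ hi => by simp [Finsupp.notMem_support_iff.mp hi])
  rw [hs, hs, h3]; ring

lemma homComp_lt_rowDeg {q p : ℕ} (G : Matrix (Fin q) (Fin p) (MvPolynomial (Fin p) ℝ))
    (l : Fin q) (a : Fin p) {d : ℕ} (hd : d < rowDeg G l) :
    MvPolynomial.homogeneousComponent d (G l a) = 0 := by
  by_contra h
  have hmem : d ∈ {d | ∃ j, MvPolynomial.homogeneousComponent d (G l j) ≠ 0} := ⟨a, h⟩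
  exact absurd (Nat.sInf_le hmem) (not_le.mpr hd)

lemma key {q p : ℕ} (G : Matrix (Fin q) (Fin p) (MvPolynomial (Fin p) ℝ)) (y : Fin p → ℝ)
    (l : Fin q) (a : Fin p) :
    Tendsto (fun T : ℕ => ((T : ℝ) ^ ((rowDeg G l : ℝ) / 2)) *
        MvPolynomial.eval (fun i => (T : ℝ) ^ (-(1 : ℝ) / 2) * y i) (G l a)) atTop
      (𝓝 (MvPolynomial.eval y (lowMat G l a))) := by
  set g := G l a with hg
  set s := rowDeg G l with hsdef
  set D := g.totalDegree with hD
  set K := MvPolynomial.eval y (MvPolynomial.homogeneousComponent s g) with hK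
  have hlow : MvPolynomial.eval y (lowMat G l a) = K := rfl
  rw [hlow]
  -- the surrogate function
  set F : ℕ → ℝ := fun T => ∑ d ∈ Finset.range (D + 1),
    ((T : ℝ) ^ (((s : ℝ) - d) / 2)) *
      MvPolynomial.eval y (MvPolynomial.homogeneousComponent d g) with hF
  have hFtend : Tendsto F atTop (𝓝 K) := by
    have hterm : ∀ d ∈ Finset.range (D + 1),
        Tendsto (fun T : ℕ => ((T : ℝ) ^ (((s : ℝ) - d) / 2)) *
          MvPolynomial.eval y (MvPolynomial.homogeneousComponent d g)) atTop
          (𝓝 (if d = s then K else 0)) := by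
      intro d _
      rcases lt_trichotomy d s with hds | hds | hds
      · have h0 : MvPolynomial.homogeneousComponent d g = 0 := homComp_lt_rowDeg G l a hds
        rw [if_neg hds.ne]
        simpa [h0] using tendsto_const_nhds (α := ℝ) (f := atTop (α := ℕ))
      · rw [if_pos hds]
        subst hds
        simp only [sub_self, zero_div, Real.rpow_zero, one_mul]
        exact tendsto_const_nhds
      · rw [if_neg hds.ne']
        have hpos : (0 : ℝ) < ((d : ℝ) - s) / 2 := by
          have : (s : ℝ) < d := by exact_mod_cast hds
          linarith
        have h1 : Tendsto (fun x : ℝ => x ^ (-(((d : ℝ) - s) / 2))) atTop (𝓝 0) :=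
          tendsto_rpow_neg_atTop hpos
        have h2 : Tendsto (fun T : ℕ => ((T : ℝ) ^ (((s : ℝ) - d) / 2))) atTop (𝓝 0) := by
          have h3 := h1.comp (tendsto_natCast_atTop_atTop (R := ℝ))
          have he : (((s : ℝ) - d) / 2) = -(((d : ℝ) - s) / 2) := by ring
          simp only [he]
          exact h3
        simpa using h2.mul_const _
    have := tendsto_finset_sum (Finset.range (D + 1)) hterm
    convert this using 1
    rw [Finset.sum_ite_eq' (Finset.range (D + 1)) s
      (fun _ => K)]
    by_cases hsD : s ∈ Finset.range (D + 1)
    · rw [if_pos hsD]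
    · rw [if_neg hsD]
      have hDs : D < s := by simpa using hsD
      rw [hK, MvPolynomial.homogeneousComponent_eq_zero s g hDs, map_zero]
  -- eventual equality
  have heq : (fun T : ℕ => ((T : ℝ) ^ ((s : ℝ) / 2)) *
      MvPolynomial.eval (fun i => (T : ℝ) ^ (-(1 : ℝ) / 2) * y i) g) =ᶠ[atTop] F := by
    filter_upwards [eventually_ge_atTop 1] with T hT
    have hTpos : (0 : ℝ) < T := by exact_mod_cast Nat.lt_of_lt_of_le Nat.zero_lt_one hT
    have hsplit : MvPolynomial.eval (fun i => (T : ℝ) ^ (-(1 : ℝ) / 2) * y i) g =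
        ∑ d ∈ Finset.range (D + 1),
          MvPolynomial.eval (fun i => (T : ℝ) ^ (-(1 : ℝ) / 2) * y i)
            (MvPolynomial.homogeneousComponent d g) := by
      conv_lhs => rw [← MvPolynomial.sum_homogeneousComponent g]
      rw [map_sum]
    rw [hsplit, Finset.mul_sum, hF]
    refine Finset.sum_congr rfl fun d _ => ?_
    rw [eval_mul_c (MvPolynomial.homogeneousComponent_isHomogeneous d g)]
    have hc : ((T : ℝ) ^ (-(1 : ℝ) / 2)) ^ d = (T : ℝ) ^ ((-(1 : ℝ) / 2) * d) := by
      rw [← Real.rpow_natCast ((T : ℝ) ^ (-(1 : ℝ) / 2)) d, ← Real.rpow_mul hTpos.le]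
    rw [hc, ← mul_assoc, ← Real.rpow_add hTpos]
    congr 2
    push_cast
    ring
  exact hFtend.congr' heq.symm

lemma MT_apply {q p : ℕ} (G : Matrix (Fin q) (Fin p) (MvPolynomial (Fin p) ℝ))
    (U : Matrix (Fin p) (Fin p) ℝ) (T : ℝ) (y : Fin p → ℝ) (i j : Fin q) :
    MT G U T y i j = ∑ b, ∑ a,
      ((T ^ ((rowDeg G i : ℝ) / 2)) *
          MvPolynomial.eval (fun r => T ^ (-(1 : ℝ) / 2) * y r) (G i a)) * U a b *
      ((T ^ ((rowDeg G j : ℝ) / 2)) *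
          MvPolynomial.eval (fun r => T ^ (-(1 : ℝ) / 2) * y r) (G j b)) := by
  set E := evalMat G (fun r => T ^ (-(1 : ℝ) / 2) * y r) with hE
  set S := scaleMat (rowDeg G) T with hS
  have hA : MT G U T y = (S * E) * U * (S * E)ᵀ := by
    rw [MT, ← hE, ← hS, Matrix.transpose_mul, hS, scaleMat, Matrix.diagonal_transpose]
    simp only [Matrix.mul_assoc]
  rw [hA, Matrix.mul_apply]
  refine Finset.sum_congr rfl fun b _ => ?_
  rw [Matrix.mul_apply, Finset.sum_mul]
  refine Finset.sum_congr rfl fun a _ => ?_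
  rw [hS, scaleMat, Matrix.transpose_apply, Matrix.diagonal_mul, Matrix.diagonal_mul]
  simp only [hE, evalMat, Matrix.of_apply]

lemma Bbar_apply {q p : ℕ} (G : Matrix (Fin q) (Fin p) (MvPolynomial (Fin p) ℝ))
    (U : Matrix (Fin p) (Fin p) ℝ) (y : Fin p → ℝ) (i j : Fin q) :
    Bbar G U y i j = ∑ b, ∑ a,
      MvPolynomial.eval y (lowMat G i a) * U a b * MvPolynomial.eval y (lowMat G j b) := by
  simp only [Bbar, Matrix.mul_apply, Matrix.transpose_apply, evalMat, Matrix.of_apply,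
    Finset.sum_mul, Finset.mul_sum]

lemma conv_gen {q p : ℕ} (G : Matrix (Fin q) (Fin p) (MvPolynomial (Fin p) ℝ))
    (y : Fin p → ℝ) (U : Matrix (Fin p) (Fin p) ℝ) (Useq : ℕ → Matrix (Fin p) (Fin p) ℝ)
    (hU : ∀ a b : Fin p, Tendsto (fun T : ℕ => Useq T a b) atTop (𝓝 (U a b)))
    (i j : Fin q) :
    Tendsto (fun T : ℕ => MT G (Useq T) (T : ℝ) y i j) atTop (𝓝 (Bbar G U y i j)) := by
  simp only [MT_apply, Bbar_apply]
  refine tendsto_finset_sum _ fun b _ => tendsto_finset_sum _ fun a _ => ?_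
  exact ((key G y i a).mul (hU a b)).mul (key G y j b)

/-- If the lowest-degree row matrix `Ḡ` of `G` is in echelon form with scaling
`Δ_T`, then for every `y` and every symmetric positive definite `U`,
`Δ_T G(T^{-1/2}y) U G(T^{-1/2}y)ᵀ Δ_T → Ḡ(y) U Ḡ(y)ᵀ` as `T → ∞` (entrywise), and the same
limit holds when `U` is replaced by any sequence `U_T ∈ F_p` with `U_T → U`. -/
theorem statement_4 {q p : ℕ}
    (G : Matrix (Fin q) (Fin p) (MvPolynomial (Fin p) ℝ))
    (hech : IsEchelon G) :
    ∀ (y : Fin p → ℝ) (U : Matrix (Fin p) (Fin p) ℝ), U.IsSymm → U.PosDef →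
      (∀ i j : Fin q,
        Tendsto (fun T : ℕ => MT G U (T : ℝ) y i j) atTop (𝓝 (Bbar G U y i j))) ∧
      ∀ Useq : ℕ → Matrix (Fin p) (Fin p) ℝ,
        (∀ T, (Useq T).IsSymm ∧ (Useq T).PosDef) →
        (∀ a b : Fin p, Tendsto (fun T : ℕ => Useq T a b) atTop (𝓝 (U a b))) →
        ∀ i j : Fin q,
          Tendsto (fun T : ℕ => MT G (Useq T) (T : ℝ) y i j) atTop (𝓝 (Bbar G U y i j)) := by
  intro y U hUs hUpd
  refine ⟨fun i j => conv_gen G y U (fun _ => U) (fun a b => tendsto_const_nhds) i j,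
    fun Useq _hF hUc i j => conv_gen G y U Useq hUc i j⟩
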